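/- arXiv:2104.06685 — 4 statements merged into one kernel-verified Lean document; each statement's English description precedes it below -/
import Mathlib

section
/- Let {z_ω : ω ∈ 𝒲} be random vectors in ℝ^p and suppose the number of Byzantine workers satisfies B < W/2. Then the (exact) geometric median of {z_ω : ω ∈ 𝒲} satisfies E‖geomed{z_ω}‖² ≤ (C_α²/R) Σ_{ω∈ℛ} E‖z_ω‖². -/
open MeasureTheory Finset

/-- `z` is a geometric median of the vectors `v ω`, i.e. a minimizer of
`y ↦ ∑ ω, ‖y − v ω‖`. -/
def IsGeomMedian {ι : Type*} [Fintype ι] {E : Type*} [NormedAddCommGroup E]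
    (v : ι → E) (z : E) : Prop :=
  ∀ y : E, ∑ ω, ‖z - v ω‖ ≤ ∑ ω, ‖y - v ω‖

/-!
Testing the minimality of the geometric median `m` against the point `0` and applying the triangle
inequality to each term gives `(R - B) ‖m‖ ≤ 2 ∑_{ω ∈ ℛ} ‖z_ω‖`: regular workers can pull the median
by at most their own norms, and each Byzantine worker can shift the balance by at most `‖m‖`.
Squaring, Cauchy–Schwarz over `ℛ`, `C_α = 2R / (R - B)`, and integrating give the bound.
-/

namespace IsGeomMedian

variable {ι E : Type*} [Fintype ι] [DecidableEq ι] [NormedAddCommGroup E] {v : ι → E} {z : E}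

theorem card_sub_mul_norm_le (h : IsGeomMedian v z) (s : Finset ι) :
    ((#s : ℝ) - #sᶜ) * ‖z‖ ≤ 2 * ∑ ω ∈ s, ‖v ω‖ := by
  have h_zero : ∑ ω, ‖z - v ω‖ ≤ ∑ ω, ‖v ω‖ := by simpa using h 0
  have h_reg : ∑ ω ∈ s, (‖z‖ - ‖v ω‖) ≤ ∑ ω ∈ s, ‖z - v ω‖ :=
    sum_le_sum fun ω _ => norm_sub_norm_le _ _
  have h_byz : ∑ ω ∈ sᶜ, (‖v ω‖ - ‖z‖) ≤ ∑ ω ∈ sᶜ, ‖z - v ω‖ :=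
    sum_le_sum fun ω _ => (norm_sub_norm_le _ _).trans_eq (norm_sub_rev _ _)
  rw [← sum_add_sum_compl s, ← sum_add_sum_compl s (fun ω => ‖v ω‖)] at h_zero
  simp only [sum_sub_distrib, sum_const, nsmul_eq_mul] at h_reg h_byz
  linarith

theorem sq_norm_le (h : IsGeomMedian v z) {s : Finset ι} (hs : #sᶜ < #s) :
    ‖z‖ ^ 2 ≤ 4 * #s / ((#s : ℝ) - #sᶜ) ^ 2 * ∑ ω ∈ s, ‖v ω‖ ^ 2 := by
  have hd : (0 : ℝ) < #s - #sᶜ := sub_pos.2 (by exact_mod_cast hs)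
  have h_lin := h.card_sub_mul_norm_le s
  have h_cs := sq_sum_le_card_mul_sum_sq (s := s) (f := fun ω => ‖v ω‖)
  rw [div_mul_eq_mul_div, le_div_iff₀ (by positivity)]
  calc ‖z‖ ^ 2 * ((#s : ℝ) - #sᶜ) ^ 2 = (((#s : ℝ) - #sᶜ) * ‖z‖) ^ 2 := by ring
    _ ≤ (2 * ∑ ω ∈ s, ‖v ω‖) ^ 2 := pow_le_pow_left₀ (by positivity) h_lin 2
    _ ≤ 4 * #s * ∑ ω ∈ s, ‖v ω‖ ^ 2 := by nlinarith

end IsGeomMedian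

theorem two_sub_two_mul_div_one_sub_two_mul_of_frac {R B : ℝ} (hRB : R + B ≠ 0) :
    (2 - 2 * (B / (R + B))) / (1 - 2 * (B / (R + B))) = 2 * R / (R - B) := by
  have h_num : 2 - 2 * (B / (R + B)) = 2 * R / (R + B) := by field_simp; ring
  have h_den : 1 - 2 * (B / (R + B)) = (R - B) / (R + B) := by field_simp; ring
  rw [h_num, h_den, div_div_div_cancel_right₀ hRB]

theorem geomed_second_moment_bound_general
    {p : ℕ} {ι : Type*} [Fintype ι] [DecidableEq ι]
    {Ω : Type*} [MeasureSpace Ω]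
    (Reg : Finset ι) (hB : 2 * Regᶜ.card < Fintype.card ι)
    (z : ι → Ω → EuclideanSpace ℝ (Fin p))
    (hz2 : ∀ ω ∈ Reg, MemLp (z ω) 2 volume)
    (m : Ω → EuclideanSpace ℝ (Fin p))
    (hm : ∀ a : Ω, IsGeomMedian (fun ω => z ω a) (m a))
    (α Cα : ℝ)
    (hα : α = (Regᶜ.card : ℝ) / (Fintype.card ι : ℝ))
    (hCα : Cα = (2 - 2 * α) / (1 - 2 * α)) :
    ∫ a, ‖m a‖ ^ 2 ≤ Cα ^ 2 / (Reg.card : ℝ) * ∑ ω ∈ Reg, ∫ a, ‖z ω a‖ ^ 2 := by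
  have h_card : #Reg + #Regᶜ = Fintype.card ι := card_add_card_compl Reg
  have h_lt : #Regᶜ < #Reg := by omega
  have h_diff : (0 : ℝ) < #Reg - #Regᶜ := sub_pos.2 (by exact_mod_cast h_lt)
  have h_total : (0 : ℝ) < #Reg + #Regᶜ := by linarith [(#Regᶜ).cast_nonneg (α := ℝ)]
  have h_const : Cα ^ 2 / #Reg = 4 * #Reg / ((#Reg : ℝ) - #Regᶜ) ^ 2 := by
    rw [hCα, hα, ← h_card, Nat.cast_add,
      two_sub_two_mul_div_one_sub_two_mul_of_frac h_total.ne']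
    field_simp
    ring
  have h_int : ∀ ω ∈ Reg, Integrable (fun a => ‖z ω a‖ ^ 2) := fun ω hω =>
    (hz2 ω hω).norm.integrable_sq
  calc ∫ a, ‖m a‖ ^ 2 ≤ ∫ a, Cα ^ 2 / #Reg * ∑ ω ∈ Reg, ‖z ω a‖ ^ 2 :=
        integral_mono_of_nonneg (.of_forall fun _ => by positivity)
          ((integrable_finsetSum Reg h_int).const_mul _)
          (.of_forall fun a => h_const ▸ (hm a).sq_norm_le h_lt)
    _ = Cα ^ 2 / #Reg * ∑ ω ∈ Reg, ∫ a, ‖z ω a‖ ^ 2 := by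
        rw [integral_const_mul, integral_finsetSum Reg h_int]

/-- **Geometric median bound (exact median).**
In a system of `W` workers with regular set `Reg` (of cardinality `R`) and `B = W − R`
Byzantine workers, let `{z_ω}` be random vectors in `ℝ^p` and suppose `B < W/2`.  Then the
geometric median `m` of `{z_ω : ω ∈ 𝒲}` satisfies
`E‖m‖² ≤ (C_α²/R) ∑_{ω ∈ Reg} E‖z_ω‖²`, where `α = B/W` and `C_α = (2−2α)/(1−2α)`. -/
theorem geomed_second_moment_bound
    {p : ℕ} {ι : Type*} [Fintype ι] [DecidableEq ι]
    {Ω : Type*} [MeasureSpace Ω] [IsProbabilityMeasure (volume : Measure Ω)]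
    (Reg : Finset ι) (hB : 2 * Regᶜ.card < Fintype.card ι)
    (z : ι → Ω → EuclideanSpace ℝ (Fin p))
    (hz_meas : ∀ ω, Measurable (z ω))
    (hz2 : ∀ ω ∈ Reg, MemLp (z ω) 2 volume)
    (m : Ω → EuclideanSpace ℝ (Fin p)) (hm_meas : Measurable m)
    (hm : ∀ a : Ω, IsGeomMedian (fun ω => z ω a) (m a))
    (α Cα : ℝ)
    (hα : α = (Regᶜ.card : ℝ) / (Fintype.card ι : ℝ))
    (hCα : Cα = (2 - 2 * α) / (1 - 2 * α)) :
    ∫ a, ‖m a‖ ^ 2 ≤ Cα ^ 2 / (Reg.card : ℝ) * ∑ ω ∈ Reg, ∫ a, ‖z ω a‖ ^ 2 :=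
  geomed_second_moment_bound_general Reg hB z hz2 m hm α Cα hα hCα
end

section
/- Let {z_ω : ω ∈ 𝒲} be random vectors in ℝ^p and suppose the number of Byzantine workers satisfies B < W/2. Then any ε-approximate geometric median z*_ε of {z_ω : ω ∈ 𝒲} satisfies E‖z*_ε‖² ≤ (2C_α²/R) Σ_{ω∈ℛ} E‖z_ω‖² + 2ε²/(W−2B)². -/
open MeasureTheory Finset

/-- `z` is an `ε`-approximate geometric median of the vectors `v ω`:
`∑ ω, ‖z − v ω‖ ≤ inf_y ∑ ω, ‖y − v ω‖ + ε`. -/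
def IsApproxGeomMedian {ι : Type*} [Fintype ι] {E : Type*} [NormedAddCommGroup E]
    (ε : ℝ) (v : ι → E) (z : E) : Prop :=
  ∑ ω, ‖z - v ω‖ ≤ (⨅ y : E, ∑ ω, ‖y - v ω‖) + ε

/-!
Comparing an approximate median `z` with the candidate `0` gives
`∑ ω, ‖z - v ω‖ ≤ ∑ ω, ‖v ω‖ + ε`. By the triangle inequality each regular term is at least
`‖z‖ - ‖v ω‖` and each Byzantine term at least `‖v ω‖ - ‖z‖`, so the Byzantine vectors cancel
and `(R - B) ‖z‖ ≤ 2 ∑_{ω ∈ ℛ} ‖v ω‖ + ε`, whatever they are. Squaring, Cauchy–Schwarz and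
taking expectations give the bound, in which `2 C_α² / R = 8 R / (R - B)²`.
-/

namespace IsApproxGeomMedian

variable {ι E : Type*} [Fintype ι] [NormedAddCommGroup E] {ε : ℝ} {v : ι → E} {z : E}

theorem sum_norm_sub_le (h : IsApproxGeomMedian ε v z) :
    ∑ ω, ‖z - v ω‖ ≤ ∑ ω, ‖v ω‖ + ε := by
  have hbdd : BddBelow (Set.range fun y : E => ∑ ω, ‖y - v ω‖) :=
    ⟨0, by rintro _ ⟨y, rfl⟩; positivity⟩
  have hzero : (⨅ y : E, ∑ ω, ‖y - v ω‖) ≤ ∑ ω, ‖v ω‖ :=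
    (ciInf_le hbdd 0).trans_eq (by simp)
  exact h.trans (by linarith)

theorem card_sub_card_compl_mul_norm_le [DecidableEq ι] (h : IsApproxGeomMedian ε v z)
    (S : Finset ι) : ((#S : ℝ) - #Sᶜ) * ‖z‖ ≤ 2 * ∑ ω ∈ S, ‖v ω‖ + ε := by
  have hS : ∑ ω ∈ S, (‖z‖ - ‖v ω‖) ≤ ∑ ω ∈ S, ‖z - v ω‖ :=
    sum_le_sum fun ω _ => norm_sub_norm_le _ _
  have hSc : ∑ ω ∈ Sᶜ, (‖v ω‖ - ‖z‖) ≤ ∑ ω ∈ Sᶜ, ‖z - v ω‖ :=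
    sum_le_sum fun ω _ => (norm_sub_norm_le _ _).trans_eq (norm_sub_rev _ _)
  have hmed := h.sum_norm_sub_le
  rw [← sum_add_sum_compl S (fun ω => ‖z - v ω‖), ← sum_add_sum_compl S (fun ω => ‖v ω‖)]
    at hmed
  simp only [sum_sub_distrib, sum_const, nsmul_eq_mul] at hS hSc
  linarith

theorem card_sub_card_compl_sq_mul_norm_sq_le [DecidableEq ι] (h : IsApproxGeomMedian ε v z)
    {S : Finset ι} (hS : #Sᶜ ≤ #S) :
    ((#S : ℝ) - #Sᶜ) ^ 2 * ‖z‖ ^ 2 ≤ 8 * #S * ∑ ω ∈ S, ‖v ω‖ ^ 2 + 2 * ε ^ 2 := by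
  have hlin := h.card_sub_card_compl_mul_norm_le S
  have hd : (0 : ℝ) ≤ (#S : ℝ) - #Sᶜ := sub_nonneg.mpr (by exact_mod_cast hS)
  have hsq : ((#S - #Sᶜ) * ‖z‖) ^ 2 ≤ (2 * ∑ ω ∈ S, ‖v ω‖ + ε) ^ 2 :=
    pow_le_pow_left₀ (by positivity) hlin 2
  have hcs := sq_sum_le_card_mul_sum_sq (s := S) (f := fun ω => ‖v ω‖)
  nlinarith [add_sq_le (a := 2 * ∑ ω ∈ S, ‖v ω‖) (b := ε)]

end IsApproxGeomMedian

section Expectation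

variable {ι Ω E : Type*} [MeasurableSpace Ω] {μ : Measure Ω} [IsProbabilityMeasure μ]

theorem sum_integral_add_const {S : Finset ι} {f : ι → Ω → ℝ}
    (hf : ∀ ω ∈ S, Integrable (f ω) μ) (c : ℝ) :
    ∑ ω ∈ S, ∫ a, (f ω a + c) ∂μ = ∑ ω ∈ S, ∫ a, f ω a ∂μ + #S * c := by
  rw [← nsmul_eq_mul, ← sum_const, ← sum_add_distrib]
  refine sum_congr rfl fun ω hω => ?_
  rw [integral_add (hf ω hω) (integrable_const c), integral_const, probReal_univ, one_smul]

variable [Fintype ι] [DecidableEq ι] [NormedAddCommGroup E]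

theorem card_sub_card_compl_sq_mul_integral_norm_sq_le {ε : ℝ} {v : ι → Ω → E} {z : Ω → E}
    (hmed : ∀ a, IsApproxGeomMedian ε (fun ω => v ω a) (z a))
    {S : Finset ι} (hS : #Sᶜ ≤ #S) (hv : ∀ ω ∈ S, MemLp (v ω) 2 μ) :
    ((#S : ℝ) - #Sᶜ) ^ 2 * ∫ a, ‖z a‖ ^ 2 ∂μ
      ≤ 8 * #S * ∑ ω ∈ S, ∫ a, ‖v ω a‖ ^ 2 ∂μ + 2 * ε ^ 2 := by
  have hint : ∀ ω ∈ S, Integrable (fun a => ‖v ω a‖ ^ 2) μ := fun ω hω =>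
    (hv ω hω).integrable_norm_pow two_ne_zero
  have hsum : Integrable (fun a => 8 * #S * ∑ ω ∈ S, ‖v ω a‖ ^ 2 + 2 * ε ^ 2) μ :=
    ((integrable_finsetSum S hint).const_mul _).add (integrable_const _)
  calc ((#S : ℝ) - #Sᶜ) ^ 2 * ∫ a, ‖z a‖ ^ 2 ∂μ
      = ∫ a, ((#S : ℝ) - #Sᶜ) ^ 2 * ‖z a‖ ^ 2 ∂μ := (integral_const_mul _ _).symm
    _ ≤ ∫ a, (8 * #S * ∑ ω ∈ S, ‖v ω a‖ ^ 2 + 2 * ε ^ 2) ∂μ :=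
      integral_mono_of_nonneg (.of_forall fun a => by positivity) hsum
        (.of_forall fun a => (hmed a).card_sub_card_compl_sq_mul_norm_sq_le hS)
    _ = 8 * #S * ∑ ω ∈ S, ∫ a, ‖v ω a‖ ^ 2 ∂μ + 2 * ε ^ 2 := by
      rw [integral_add ((integrable_finsetSum S hint).const_mul _) (integrable_const _),
        integral_const_mul, integral_finsetSum S hint, integral_const, probReal_univ,
        one_smul]

end Expectation

theorem two_mul_sq_div_eq_eight_mul_div_sq {R B : ℝ} (hB : 0 ≤ B) (hBR : B < R) :
    2 * ((2 - 2 * (B / (R + B))) / (1 - 2 * (B / (R + B)))) ^ 2 / R = 8 * R / (R - B) ^ 2 := by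
  have : R + B ≠ 0 := by linarith
  have : R ≠ 0 := by linarith
  have : R - B ≠ 0 := by linarith
  have h : 1 - 2 * (B / (R + B)) = (R - B) / (R + B) := by field_simp; ring
  rw [h]
  field_simp
  ring

theorem approx_geomed_second_moment_bound_general
    {p : ℕ} {ι : Type*} [Fintype ι] [DecidableEq ι]
    {Ω : Type*} [MeasureSpace Ω] [IsProbabilityMeasure (volume : Measure Ω)]
    (Reg : Finset ι) (hB : 2 * Regᶜ.card < Fintype.card ι)
    (z : ι → Ω → EuclideanSpace ℝ (Fin p))
    (hz2 : ∀ ω ∈ Reg, MemLp (z ω) 2 volume)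
    (ε : ℝ)
    (zeps : Ω → EuclideanSpace ℝ (Fin p))
    (hmed : ∀ a : Ω, IsApproxGeomMedian ε (fun ω => z ω a) (zeps a))
    (α Cα : ℝ)
    (hα : α = (Regᶜ.card : ℝ) / (Fintype.card ι : ℝ))
    (hCα : Cα = (2 - 2 * α) / (1 - 2 * α)) :
    ∫ a, ‖zeps a‖ ^ 2
      ≤ 2 * Cα ^ 2 / (Reg.card : ℝ) * ∑ ω ∈ Reg, ∫ a, ‖z ω a‖ ^ 2
        + 2 * ε ^ 2 / ((Fintype.card ι : ℝ) - 2 * (Regᶜ.card : ℝ)) ^ 2 := by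
  have hW : (Fintype.card ι : ℝ) = #Reg + #Regᶜ := by
    exact_mod_cast (card_add_card_compl Reg).symm
  have hBR : #Regᶜ < #Reg := by have := card_add_card_compl Reg; omega
  have hmain := card_sub_card_compl_sq_mul_integral_norm_sq_le hmed hBR.le hz2
  -- the trailing `+ 2 * ε ^ 2 / …` of the statement lies inside the `∫` binder
  rw [sum_integral_add_const fun ω hω => (hz2 ω hω).integrable_norm_pow two_ne_zero,
    hCα, hα, hW, two_mul_sq_div_eq_eight_mul_div_sq (Nat.cast_nonneg _) (Nat.cast_lt.mpr hBR)]
  set R : ℝ := (#Reg : ℝ)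
  set B : ℝ := (#Regᶜ : ℝ)
  set M := ∑ ω ∈ Reg, ∫ a, ‖z ω a‖ ^ 2 ∂volume
  have hd : 0 < R - B := sub_pos.mpr (Nat.cast_lt.mpr hBR)
  have hB0 : 0 ≤ B := Nat.cast_nonneg _
  rw [show R + B - 2 * B = R - B by ring]
  rw [← le_div_iff₀' (by positivity)] at hmain
  calc ∫ a, ‖zeps a‖ ^ 2 ≤ (8 * R * M + 2 * ε ^ 2) / (R - B) ^ 2 := hmain
    _ = 8 * R / (R - B) ^ 2 * M + 2 * ε ^ 2 / (R - B) ^ 2 * 1 := by ring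
    _ ≤ 8 * R / (R - B) ^ 2 * M + 2 * ε ^ 2 / (R - B) ^ 2 * (8 * R * R / (R - B) ^ 2) := by
      gcongr
      rw [one_le_div (by positivity)]
      nlinarith
    _ = 8 * R / (R - B) ^ 2 * (M + R * (2 * ε ^ 2 / (R - B) ^ 2)) := by ring

/-- **Geometric median bound (ε-approximate median).**
In a system of `W` workers with regular set `Reg` (of cardinality `R`) and `B = W − R`
Byzantine workers, let `{z_ω}` be random vectors in `ℝ^p` and suppose `B < W/2`.  Then any
`ε`-approximate geometric median `z*_ε` of `{z_ω : ω ∈ 𝒲}` satisfies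
`E‖z*_ε‖² ≤ (2C_α²/R) ∑_{ω ∈ Reg} E‖z_ω‖² + 2ε²/(W−2B)²`,
where `α = B/W` and `C_α = (2−2α)/(1−2α)`. -/
theorem approx_geomed_second_moment_bound
    {p : ℕ} {ι : Type*} [Fintype ι] [DecidableEq ι]
    {Ω : Type*} [MeasureSpace Ω] [IsProbabilityMeasure (volume : Measure Ω)]
    (Reg : Finset ι) (hB : 2 * Regᶜ.card < Fintype.card ι)
    (z : ι → Ω → EuclideanSpace ℝ (Fin p))
    (hz_meas : ∀ ω, Measurable (z ω))
    (hz2 : ∀ ω ∈ Reg, MemLp (z ω) 2 volume)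
    (ε : ℝ) (hε : 0 ≤ ε)
    (zeps : Ω → EuclideanSpace ℝ (Fin p)) (hzeps_meas : Measurable zeps)
    (hmed : ∀ a : Ω, IsApproxGeomMedian ε (fun ω => z ω a) (zeps a))
    (α Cα : ℝ)
    (hα : α = (Regᶜ.card : ℝ) / (Fintype.card ι : ℝ))
    (hCα : Cα = (2 - 2 * α) / (1 - 2 * α)) :
    ∫ a, ‖zeps a‖ ^ 2
      ≤ 2 * Cα ^ 2 / (Reg.card : ℝ) * ∑ ω ∈ Reg, ∫ a, ‖z ω a‖ ^ 2
        + 2 * ε ^ 2 / ((Fintype.card ι : ℝ) - 2 * (Regᶜ.card : ℝ)) ^ 2 :=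
  approx_geomed_second_moment_bound_general Reg hB z hz2 ε zeps hmed α Cα hα hCα
end

section
/- Let f_1, …, f_J : ℝ^p → ℝ be differentiable functions each with L-Lipschitz continuous gradients, let f̄ := (1/J) Σ_{j=1}^J f_j, let x, φ_1, …, φ_J ∈ ℝ^p, let i be sampled uniformly at random from {1,…,J}, and define the SAGA corrected gradient g := ∇f_i(x) − ∇f_i(φ_i) + (1/J) Σ_{j=1}^J ∇f_j(φ_j). Then E[g] = ∇f̄(x) and E‖g − ∇f̄(x)‖² ≤ L² (1/J) Σ_{j=1}^J ‖x − φ_j‖². -/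
open Finset InnerProductSpace

/-! Averaging over `i`, the correction `-∇f_i(φ_i)` cancels the mean of the stored gradients
`∇f_j(φ_j)`, which gives unbiasedness. For the variance, `g_i - ∇f̄(x)` is `X_i` minus its mean,
where `X_i = ∇f_i(x) - ∇f_i(φ_i)`; centring can only lower the second moment, and
`‖X_i‖ ≤ L ‖x - φ_i‖` by the Lipschitz bound. -/

section Gradient

variable {ι F : Type*} [NormedAddCommGroup F] [InnerProductSpace ℝ F] [CompleteSpace F]
  {x : F}

theorem HasGradientAt.fun_sum {s : Finset ι} {f : ι → F → ℝ} {f' : ι → F}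
    (hf : ∀ j ∈ s, HasGradientAt (f j) (f' j) x) :
    HasGradientAt (fun y => ∑ j ∈ s, f j y) (∑ j ∈ s, f' j) x := by
  rw [hasGradientAt_iff_hasFDerivAt, map_sum]
  exact HasFDerivAt.fun_sum fun j hj => (hf j hj).hasFDerivAt

theorem HasGradientAt.const_mul {f : F → ℝ} {f' : F} (hf : HasGradientAt f f' x) (c : ℝ) :
    HasGradientAt (fun y => c * f y) (c • f') x := by
  rw [hasGradientAt_iff_hasFDerivAt, map_smul]
  exact hf.hasFDerivAt.const_mul c

end Gradient

section Variance

variable {ι E : Type*} [NormedAddCommGroup E] [InnerProductSpace ℝ E]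

theorem Finset.sum_norm_sub_mean_sq_le (s : Finset ι) (X : ι → E) :
    ∑ i ∈ s, ‖X i - (#s : ℝ)⁻¹ • ∑ j ∈ s, X j‖ ^ 2 ≤ ∑ i ∈ s, ‖X i‖ ^ 2 := by
  set m := (#s : ℝ)⁻¹ • ∑ j ∈ s, X j
  have hsum : ∑ j ∈ s, X j = (#s : ℝ) • m := by
    rcases s.eq_empty_or_nonempty with rfl | hs
    · simp
    · rw [smul_inv_smul₀ (by exact_mod_cast hs.card_pos.ne')]
  calc ∑ i ∈ s, ‖X i - m‖ ^ 2
      = ∑ i ∈ s, ‖X i‖ ^ 2 - 2 * ⟪∑ i ∈ s, X i, m⟫_ℝ + #s * ‖m‖ ^ 2 := by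
        simp only [norm_sub_sq_real, sum_add_distrib, sum_sub_distrib, sum_const, nsmul_eq_mul,
          ← mul_sum, sum_inner]
    _ = ∑ i ∈ s, ‖X i‖ ^ 2 - #s * ‖m‖ ^ 2 := by
        rw [hsum, real_inner_smul_left, real_inner_self_eq_norm_sq]; ring
    _ ≤ ∑ i ∈ s, ‖X i‖ ^ 2 := sub_le_self _ (by positivity)

end Variance

section Saga

variable {ι E : Type*} (s : Finset ι)

theorem Finset.inv_smul_sum_saga_estimator {K : Type*} [DivisionRing K] [CharZero K]
    [AddCommGroup E] [Module K E] (hs : s.Nonempty) (a b : ι → E) :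
    (#s : K)⁻¹ • ∑ i ∈ s, (a i - b i + (#s : K)⁻¹ • ∑ j ∈ s, b j) =
      (#s : K)⁻¹ • ∑ i ∈ s, a i := by
  have hcard : (#s : K) ≠ 0 := by exact_mod_cast hs.card_pos.ne'
  rw [sum_add_distrib, sum_sub_distrib, sum_const, ← Nat.cast_smul_eq_nsmul K, smul_add,
    smul_sub, inv_smul_smul₀ hcard, sub_add_cancel]

theorem Finset.sum_norm_saga_estimator_sub_mean_sq_le [NormedAddCommGroup E]
    [InnerProductSpace ℝ E] (a b : ι → E) :
    ∑ i ∈ s, ‖a i - b i + (#s : ℝ)⁻¹ • ∑ j ∈ s, b j - (#s : ℝ)⁻¹ • ∑ j ∈ s, a j‖ ^ 2 ≤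
      ∑ i ∈ s, ‖a i - b i‖ ^ 2 := by
  have hrecenter : ∀ i, a i - b i + (#s : ℝ)⁻¹ • ∑ j ∈ s, b j - (#s : ℝ)⁻¹ • ∑ j ∈ s, a j =
      a i - b i - (#s : ℝ)⁻¹ • ∑ j ∈ s, (a j - b j) := fun i => by
    rw [sum_sub_distrib, smul_sub]; abel
  simpa only [hrecenter] using s.sum_norm_sub_mean_sq_le fun i => a i - b i

end Saga

theorem saga_corrected_gradient_unbiased_and_variance_general
    {p : ℕ} (J : ℕ) (hJ : 0 < J) (L : ℝ)
    (f : Fin J → EuclideanSpace ℝ (Fin p) → ℝ)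
    (hdiff : ∀ j, Differentiable ℝ (f j))
    (hlip : ∀ j, ∀ x y : EuclideanSpace ℝ (Fin p),
      ‖gradient (f j) x - gradient (f j) y‖ ≤ L * ‖x - y‖)
    (fbar : EuclideanSpace ℝ (Fin p) → ℝ)
    (hfbar : fbar = fun x => (J : ℝ)⁻¹ * ∑ j, f j x)
    (x : EuclideanSpace ℝ (Fin p)) (φ : Fin J → EuclideanSpace ℝ (Fin p))
    (g : Fin J → EuclideanSpace ℝ (Fin p))
    (hg : ∀ i, g i = gradient (f i) x - gradient (f i) (φ i)
        + (J : ℝ)⁻¹ • ∑ j, gradient (f j) (φ j)) :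
    ((J : ℝ)⁻¹ • ∑ i, g i = gradient fbar x) ∧
      ((J : ℝ)⁻¹ * ∑ i, ‖g i - gradient fbar x‖ ^ 2
        ≤ L ^ 2 * ((J : ℝ)⁻¹ * ∑ j, ‖x - φ j‖ ^ 2)) := by
  have hgrad : gradient fbar x = (J : ℝ)⁻¹ • ∑ j, gradient (f j) x := by
    subst hfbar
    exact ((HasGradientAt.fun_sum fun j _ => (hdiff j x).hasGradientAt).const_mul _).gradient
  simp only [funext hg, hgrad]
  constructor
  · simpa only [card_fin] using (univ : Finset (Fin J)).inv_smul_sum_saga_estimator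
      (univ_nonempty_iff.2 ⟨⟨0, hJ⟩⟩) (fun j => gradient (f j) x) fun j => gradient (f j) (φ j)
  · have hvar := (univ : Finset (Fin J)).sum_norm_saga_estimator_sub_mean_sq_le
      (fun j => gradient (f j) x) fun j => gradient (f j) (φ j)
    rw [card_fin] at hvar
    calc _ ≤ (J : ℝ)⁻¹ * ∑ i, ‖gradient (f i) x - gradient (f i) (φ i)‖ ^ 2 :=
          mul_le_mul_of_nonneg_left hvar (by positivity)
      _ ≤ (J : ℝ)⁻¹ * ∑ i, (L * ‖x - φ i‖) ^ 2 := by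
          gcongr with i; exact hlip i x (φ i)
      _ = L ^ 2 * ((J : ℝ)⁻¹ * ∑ j, ‖x - φ j‖ ^ 2) := by
          simp only [mul_pow, ← mul_sum]; ring

/-- **SAGA corrected gradient: unbiasedness and variance bound.**
Let `f_1, …, f_J : ℝ^p → ℝ` be differentiable with `L`-Lipschitz gradients, let
`f̄ = (1/J) ∑_j f_j`, and for points `x, φ_1, …, φ_J` define the SAGA corrected gradient
`g_i = ∇f_i(x) − ∇f_i(φ_i) + (1/J) ∑_j ∇f_j(φ_j)` for a uniformly random index `i`.
Then `E[g] = ∇f̄(x)` (the expectation over uniform `i` being the average over `i`) and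
`E‖g − ∇f̄(x)‖² ≤ L² (1/J) ∑_j ‖x − φ_j‖²`. -/
theorem saga_corrected_gradient_unbiased_and_variance
    {p : ℕ} (J : ℕ) (hJ : 0 < J) (L : ℝ) (hL : 0 < L)
    (f : Fin J → EuclideanSpace ℝ (Fin p) → ℝ)
    (hdiff : ∀ j, Differentiable ℝ (f j))
    (hlip : ∀ j, ∀ x y : EuclideanSpace ℝ (Fin p),
      ‖gradient (f j) x - gradient (f j) y‖ ≤ L * ‖x - y‖)
    (fbar : EuclideanSpace ℝ (Fin p) → ℝ)
    (hfbar : fbar = fun x => (J : ℝ)⁻¹ * ∑ j, f j x)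
    (x : EuclideanSpace ℝ (Fin p)) (φ : Fin J → EuclideanSpace ℝ (Fin p))
    (g : Fin J → EuclideanSpace ℝ (Fin p))
    (hg : ∀ i, g i = gradient (f i) x - gradient (f i) (φ i)
        + (J : ℝ)⁻¹ • ∑ j, gradient (f j) (φ j)) :
    ((J : ℝ)⁻¹ • ∑ i, g i = gradient fbar x) ∧
      ((J : ℝ)⁻¹ * ∑ i, ‖g i - gradient fbar x‖ ^ 2
        ≤ L ^ 2 * ((J : ℝ)⁻¹ * ∑ j, ‖x - φ j‖ ^ 2)) :=
  saga_corrected_gradient_unbiased_and_variance_general J hJ L f hdiff hlip fbar hfbar x φ g hg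
end

section
/- In the SAGA setting where each regular worker updates its stored points by φ_{ω,i_ω^t}^{t+1} = x^t and φ_{ω,j}^{t+1} = φ_{ω,j}^t for j ≠ i_ω^t, and the iterate is updated as x^{t+1} = x^t − γ z^t for some random vector z^t, under Assumption 1 the quantity S^t satisfies E S^{t+1} ≤ 4J E‖x^{t+1} − x^t + γ∇f(x^t)‖² + 4Jγ²L²‖x^t − x*‖² + (1 − 1/J²) S^t. -/
open MeasureTheory Finset
open scoped RealInnerProductSpace

/-!
Replacing the stored point `φ_{ω,i}` by `x` makes that entry contribute `‖x⁺ - x‖²`, while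
Young's inequality with weight `1/J` bounds every surviving entry `‖x⁺ - φ_{ω,j}‖²` by
`(1 + J)‖x⁺ - x‖² + (1 + 1/J)‖x - φ_{ω,j}‖²`; averaging over `j` gives `J ‖x⁺ - x‖²` plus
`(1 + 1/J)` times `S` minus the discarded term `‖x - φ_{ω,i}‖² / J`. As `i` is uniform, the
discarded term has expectation `S / J`, whence the factor `(1 + 1/J)(1 - 1/J) = 1 - 1/J²`.
Finally `‖x⁺ - x‖² ≤ 2‖x⁺ - x + γ∇f(x)‖² + 2γ²‖∇f(x)‖²` and `‖∇f(x)‖ ≤ L‖x - x*‖`, because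
`∇f(x*) = 0`.
-/

theorem norm_add_sq_le_add_mul {E : Type*} [SeminormedAddGroup E] (u v : E) {β : ℝ}
    (hβ : 0 < β) : ‖u + v‖ ^ 2 ≤ (1 + β) * ‖u‖ ^ 2 + (1 + β⁻¹) * ‖v‖ ^ 2 := by
  have hββ : β * β⁻¹ = 1 := mul_inv_cancel₀ hβ.ne'
  calc ‖u + v‖ ^ 2 ≤ (‖u‖ + ‖v‖) ^ 2 := by gcongr; exact norm_add_le u v
    _ ≤ _ := by nlinarith [mul_nonneg (inv_nonneg.2 hβ.le) (sq_nonneg (β * ‖u‖ - ‖v‖))]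

theorem norm_sq_le_two_mul_norm_add_sq_add {E : Type*} [SeminormedAddGroup E] (u v : E) :
    ‖u‖ ^ 2 ≤ 2 * ‖u + v‖ ^ 2 + 2 * ‖v‖ ^ 2 := by
  have h := norm_add_sq_le_add_mul (u + v) (-v) one_pos
  rw [add_neg_cancel_right, norm_neg] at h
  linarith

theorem IsLocalMin.norm_gradient_le {F : Type*} [NormedAddCommGroup F] [InnerProductSpace ℝ F]
    [CompleteSpace F] {f : F → ℝ} {xstar : F} (hmin : IsLocalMin f xstar) {L : ℝ}
    (hlip : ∀ x y, ‖gradient f x - gradient f y‖ ≤ L * ‖x - y‖) (x : F) :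
    ‖gradient f x‖ ≤ L * ‖x - xstar‖ := by
  have hcrit : gradient f xstar = 0 := by rw [gradient, hmin.fderiv_eq_zero, map_zero]
  simpa [hcrit] using hlip x xstar

section StoredPoints

variable {ι κ E : Type*} [Fintype κ] [SeminormedAddCommGroup E]

theorem sum_norm_sub_update_sq_le [DecidableEq κ] (y x : E) (φ : κ → E) (i : κ) :
    ∑ j, ‖y - Function.update φ i x j‖ ^ 2
      ≤ (Fintype.card κ : ℝ) ^ 2 * ‖y - x‖ ^ 2
        + (1 + (Fintype.card κ : ℝ)⁻¹) * (∑ j, ‖x - φ j‖ ^ 2 - ‖x - φ i‖ ^ 2) := by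
  set J : ℝ := (Fintype.card κ : ℝ)
  have hJ : 1 ≤ Fintype.card κ := Fintype.card_pos_iff.mpr ⟨i⟩
  have hcard : (#(univ.erase i) : ℝ) = J - 1 := by
    rw [card_erase_of_mem (mem_univ i), card_univ, Nat.cast_sub hJ, Nat.cast_one]
  have hterm : ∀ j, ‖y - φ j‖ ^ 2 ≤ (1 + J⁻¹) * ‖x - φ j‖ ^ 2 + (1 + J) * ‖y - x‖ ^ 2 := by
    intro j
    have hJpos : 0 < J := by positivity
    simpa [inv_inv, sub_add_sub_cancel'] using
      norm_add_sq_le_add_mul (x - φ j) (y - x) (inv_pos.2 hJpos)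
  calc ∑ j, ‖y - Function.update φ i x j‖ ^ 2
      = ‖y - x‖ ^ 2 + ∑ j ∈ univ.erase i, ‖y - φ j‖ ^ 2 := by
        rw [← add_sum_erase _ _ (mem_univ i), Function.update_self]
        congr 1
        exact sum_congr rfl fun j hj => by rw [Function.update_of_ne (ne_of_mem_erase hj)]
    _ ≤ ‖y - x‖ ^ 2
          + ∑ j ∈ univ.erase i, ((1 + J⁻¹) * ‖x - φ j‖ ^ 2 + (1 + J) * ‖y - x‖ ^ 2) := by
        gcongr with j; exact hterm j
    _ = _ := by
        rw [sum_add_distrib, ← mul_sum, sum_erase_eq_sub (mem_univ i), sum_const, nsmul_eq_mul,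
          hcard]
        ring

/-- The quantity `S` of SAGA, with `J = card κ` sample indices per worker. -/
noncomputable def storedDiscrepancy (s : Finset ι) (x : E) (φ : ι → κ → E) : ℝ :=
  (#s : ℝ)⁻¹ * ∑ ω ∈ s, (Fintype.card κ : ℝ)⁻¹ * ∑ j, ‖x - φ ω j‖ ^ 2

theorem storedDiscrepancy_nonneg (s : Finset ι) (x : E) (φ : ι → κ → E) :
    0 ≤ storedDiscrepancy s x φ := by
  unfold storedDiscrepancy; positivity

theorem storedDiscrepancy_update_le [DecidableEq κ] {s : Finset ι} (hs : s.Nonempty) (y x : E)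
    (φ : ι → κ → E) (i : ι → κ) :
    storedDiscrepancy s y (fun ω => Function.update (φ ω) (i ω) x)
      ≤ Fintype.card κ * ‖y - x‖ ^ 2 + (1 + (Fintype.card κ : ℝ)⁻¹) *
        (storedDiscrepancy s x φ
          - (Fintype.card κ : ℝ)⁻¹ * ((#s : ℝ)⁻¹ * ∑ ω ∈ s, ‖x - φ ω (i ω)‖ ^ 2)) := by
  have hs' : (#s : ℝ) ≠ 0 := by exact_mod_cast hs.card_pos.ne'
  obtain ⟨ω₀, -⟩ := hs
  have hJ : (Fintype.card κ : ℝ) ≠ 0 := by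
    exact_mod_cast (Fintype.card_pos_iff.mpr ⟨i ω₀⟩).ne'
  unfold storedDiscrepancy
  calc _ ≤ (#s : ℝ)⁻¹ * ∑ ω ∈ s, (Fintype.card κ : ℝ)⁻¹ *
          ((Fintype.card κ : ℝ) ^ 2 * ‖y - x‖ ^ 2 + (1 + (Fintype.card κ : ℝ)⁻¹) *
            (∑ j, ‖x - φ ω j‖ ^ 2 - ‖x - φ ω (i ω)‖ ^ 2)) := by
        gcongr with ω; exact sum_norm_sub_update_sq_le y x (φ ω) (i ω)
    _ = _ := by
        simp only [mul_add, mul_sub, sum_add_distrib, sum_sub_distrib, sum_const, nsmul_eq_mul,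
          ← mul_sum]
        field_simp

variable {Ω : Type*} [MeasurableSpace Ω] [MeasurableSpace κ] [MeasurableSingletonClass κ]
  {ρ : Measure Ω} {ν : Measure κ} [IsFiniteMeasure ν]

theorem MeasureTheory.MeasurePreserving.integrable_comp_of_finite {i : Ω → κ}
    (hi : MeasurePreserving i ρ ν) (g : κ → ℝ) : Integrable (fun a => g (i a)) ρ :=
  hi.integrable_comp_of_integrable .of_finite

theorem integral_comp_of_measurePreserving_uniform
    (hν : ∀ j, ν {j} = (Fintype.card κ : ENNReal)⁻¹) {i : Ω → κ} (hi : MeasurePreserving i ρ ν)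
    (g : κ → ℝ) : ∫ a, g (i a) ∂ρ = (Fintype.card κ : ℝ)⁻¹ * ∑ j, g j := by
  rw [← integral_map hi.measurable.aemeasurable (measurable_of_finite g).aestronglyMeasurable,
    hi.map_eq, integral_fintype .of_finite]
  simp [measureReal_def, hν, mul_sum]

theorem integral_mean_norm_sub_sq_comp (hν : ∀ j, ν {j} = (Fintype.card κ : ENNReal)⁻¹)
    {i : Ω → ι → κ} (hi : ∀ ω, MeasurePreserving (fun a => i a ω) ρ ν) (s : Finset ι) (x : E)
    (φ : ι → κ → E) :
    ∫ a, (#s : ℝ)⁻¹ * ∑ ω ∈ s, ‖x - φ ω (i a ω)‖ ^ 2 ∂ρ = storedDiscrepancy s x φ := by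
  rw [integral_const_mul, integral_finsetSum _ fun ω _ =>
    (hi ω).integrable_comp_of_finite fun j => ‖x - φ ω j‖ ^ 2]
  refine congrArg _ (sum_congr rfl fun ω _ => ?_)
  exact integral_comp_of_measurePreserving_uniform hν (hi ω) fun j => ‖x - φ ω j‖ ^ 2

theorem integral_storedDiscrepancy_update_le [DecidableEq κ] [IsProbabilityMeasure ρ]
    {s : Finset ι} (hs : s.Nonempty) (hν : ∀ j, ν {j} = (Fintype.card κ : ENNReal)⁻¹)
    {i : Ω → ι → κ} (hi : ∀ ω, MeasurePreserving (fun a => i a ω) ρ ν) (x : E) (y : Ω → E)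
    (φ : ι → κ → E) (hy : Integrable (fun a => ‖y a - x‖ ^ 2) ρ) :
    ∫ a, storedDiscrepancy s (y a) (fun ω => Function.update (φ ω) (i a ω) x) ∂ρ
      ≤ Fintype.card κ * ∫ a, ‖y a - x‖ ^ 2 ∂ρ
        + (1 - 1 / (Fintype.card κ : ℝ) ^ 2) * storedDiscrepancy s x φ := by
  set J : ℝ := (Fintype.card κ : ℝ)
  set M := fun a => (#s : ℝ)⁻¹ * ∑ ω ∈ s, ‖x - φ ω (i a ω)‖ ^ 2
  have hMi : Integrable M ρ :=
    (integrable_finsetSum _ fun ω _ =>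
      (hi ω).integrable_comp_of_finite fun j => ‖x - φ ω j‖ ^ 2).const_mul _
  have hyi : Integrable (fun a => J * ‖y a - x‖ ^ 2) ρ := hy.const_mul _
  have hMi' : Integrable (fun a => (1 + J⁻¹) * (storedDiscrepancy s x φ - J⁻¹ * M a)) ρ :=
    ((integrable_const _).sub (hMi.const_mul _)).const_mul _
  calc _ ≤ ∫ a, (J * ‖y a - x‖ ^ 2 + (1 + J⁻¹) * (storedDiscrepancy s x φ - J⁻¹ * M a)) ∂ρ :=
        integral_mono_of_nonneg (ae_of_all _ fun a => storedDiscrepancy_nonneg _ _ _)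
          (hyi.add hMi') (ae_of_all _ fun a => storedDiscrepancy_update_le hs (y a) x φ (i a))
    _ = J * ∫ a, ‖y a - x‖ ^ 2 ∂ρ
          + (1 + J⁻¹) * (storedDiscrepancy s x φ - J⁻¹ * storedDiscrepancy s x φ) := by
        rw [integral_add hyi hMi', integral_const_mul, integral_const_mul,
          integral_sub (integrable_const _) (hMi.const_mul _), integral_const_mul,
          integral_mean_norm_sub_sq_comp hν hi]
        simp
    _ = _ := by ring

end StoredPoints

theorem integral_norm_sq_le_two_mul_integral_norm_add_sq {Ω E : Type*} [MeasurableSpace Ω]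
    [NormedAddCommGroup E] {ρ : Measure Ω} [IsProbabilityMeasure ρ] {d : Ω → E}
    (hd : MemLp d 2 ρ) (v : E) :
    ∫ a, ‖d a‖ ^ 2 ∂ρ ≤ 2 * ∫ a, ‖d a + v‖ ^ 2 ∂ρ + 2 * ‖v‖ ^ 2 := by
  have hdv' : MemLp (fun a => d a + v) 2 ρ := hd.add (memLp_const v)
  have hdv : Integrable (fun a => 2 * ‖d a + v‖ ^ 2) ρ := hdv'.norm.integrable_sq.const_mul 2
  calc ∫ a, ‖d a‖ ^ 2 ∂ρ ≤ ∫ a, (2 * ‖d a + v‖ ^ 2 + 2 * ‖v‖ ^ 2) ∂ρ :=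
        integral_mono hd.norm.integrable_sq (hdv.add (integrable_const _))
          fun a => norm_sq_le_two_mul_norm_add_sq_add (d a) v
    _ = _ := by rw [integral_add hdv (integrable_const _), integral_const_mul]; simp

theorem saga_stored_points_recursion_general
    {p J : ℕ}
    {ι : Type*} [Fintype ι]
    (Reg : Finset ι) (hReg : Reg.Nonempty)
    {Saux : Type*} [MeasurableSpace Saux] (μaux : Measure Saux) [IsProbabilityMeasure μaux]
    (μJ : Measure (Fin J)) [IsProbabilityMeasure μJ]
    (hμJ : ∀ j, μJ {j} = (J : ENNReal)⁻¹)
    -- the objective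
    (f : EuclideanSpace ℝ (Fin p) → ℝ)
    -- Assumption 1
    (L : ℝ)
    (hlip : ∀ x y : EuclideanSpace ℝ (Fin p),
      ‖gradient f x - gradient f y‖ ≤ L * ‖x - y‖)
    (xstar : EuclideanSpace ℝ (Fin p)) (hmin : ∀ y, f xstar ≤ f y)
    -- current state, update direction and step size
    (x : EuclideanSpace ℝ (Fin p))
    (φ : ι → Fin J → EuclideanSpace ℝ (Fin p))
    (γ : ℝ)
    (z : (ι → Fin J) × Saux → EuclideanSpace ℝ (Fin p))
    (hz2 : MemLp z 2 ((Measure.pi fun _ : ι => μJ).prod μaux))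
    (xnext : (ι → Fin J) × Saux → EuclideanSpace ℝ (Fin p))
    (hxnext : ∀ a, xnext a = x - γ • z a)
    -- S and its next value
    (S : ℝ)
    (hS : S = (Reg.card : ℝ)⁻¹ * ∑ ω ∈ Reg, (J : ℝ)⁻¹ * ∑ j, ‖x - φ ω j‖ ^ 2)
    (Snext : (ι → Fin J) × Saux → ℝ)
    (hSnext : ∀ a, Snext a = (Reg.card : ℝ)⁻¹ * ∑ ω ∈ Reg, (J : ℝ)⁻¹ *
        ∑ j, ‖xnext a - (if j = a.1 ω then x else φ ω j)‖ ^ 2) :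
    ∫ a, Snext a ∂((Measure.pi fun _ : ι => μJ).prod μaux)
      ≤ 4 * J * ∫ a, ‖xnext a - x + γ • gradient f x‖ ^ 2
            ∂((Measure.pi fun _ : ι => μJ).prod μaux)
        + 4 * J * γ ^ 2 * L ^ 2 * ‖x - xstar‖ ^ 2
        + (1 - 1 / (J : ℝ) ^ 2) * S := by
  set ρ := (Measure.pi fun _ : ι => μJ).prod μaux
  have hmarg (ω : ι) : MeasurePreserving (fun a : (ι → Fin J) × Saux => a.1 ω) ρ μJ :=
    (measurePreserving_eval _ ω).comp measurePreserving_fst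
  have hS' : S = storedDiscrepancy Reg x φ := by simp [hS, storedDiscrepancy]
  have hSnext' (a) : Snext a = storedDiscrepancy Reg (xnext a)
      (fun ω => Function.update (φ ω) (a.1 ω) x) := by
    simp [hSnext, storedDiscrepancy, Function.update_apply]
  have hstep : MemLp (fun a => xnext a - x) 2 ρ := by
    rw [show (fun a => xnext a - x) = -(γ • z) from funext fun a => by simp [hxnext]]
    exact (hz2.const_smul γ).neg
  have hgrad : ‖γ • gradient f x‖ ^ 2 ≤ γ ^ 2 * L ^ 2 * ‖x - xstar‖ ^ 2 := by
    have h := IsLocalMin.norm_gradient_le (Filter.Eventually.of_forall hmin) hlip x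
    calc ‖γ • gradient f x‖ ^ 2 = γ ^ 2 * ‖gradient f x‖ ^ 2 := by
          rw [norm_smul, mul_pow, Real.norm_eq_abs, sq_abs]
      _ ≤ γ ^ 2 * (L * ‖x - xstar‖) ^ 2 := by gcongr
      _ = _ := by ring
  have hW : 0 ≤ ∫ a, ‖xnext a - x + γ • gradient f x‖ ^ 2 ∂ρ :=
    integral_nonneg fun _ => by positivity
  have hJ : (0 : ℝ) ≤ J := J.cast_nonneg
  calc ∫ a, Snext a ∂ρ
      ≤ J * ∫ a, ‖xnext a - x‖ ^ 2 ∂ρ + (1 - 1 / (J : ℝ) ^ 2) * S := by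
        simpa [hSnext', hS'] using integral_storedDiscrepancy_update_le hReg
          (by simpa using hμJ) hmarg x xnext φ hstep.norm.integrable_sq
    _ ≤ J * (2 * ∫ a, ‖xnext a - x + γ • gradient f x‖ ^ 2 ∂ρ
          + 2 * (γ ^ 2 * L ^ 2 * ‖x - xstar‖ ^ 2)) + (1 - 1 / (J : ℝ) ^ 2) * S := by
        gcongr
        exact (integral_norm_sq_le_two_mul_integral_norm_add_sq hstep _).trans (by gcongr)
    _ ≤ _ := by nlinarith [mul_nonneg hJ hW]

/-- **SAGA: evolution of the stored-point discrepancy `S` (Lemma 2, last claim).**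
Conditioned on the history (current iterate `x` and stored points `φ_{ω,j}`), each regular
worker draws a uniform sample index `i_ω` (independently of the history) and updates its
stored points by `φ_{ω,i_ω}⁺ = x`, `φ_{ω,j}⁺ = φ_{ω,j}` for `j ≠ i_ω`, while the iterate
is updated as `x⁺ = x − γz` for some random vector `z` (possibly correlated with the
sample indices, modelled by an auxiliary seed).  Under Assumption 1,
`E S⁺ ≤ 4J E‖x⁺ − x + γ∇f(x)‖² + 4Jγ²L²‖x − x*‖² + (1 − 1/J²) S`, where
`S = (1/R) ∑_{ω∈ℛ} (1/J) ∑_j ‖x − φ_{ω,j}‖²` and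
`S⁺ = (1/R) ∑_{ω∈ℛ} (1/J) ∑_j ‖x⁺ − φ_{ω,j}⁺‖²`. -/
theorem saga_stored_points_recursion
    {p J : ℕ} (hJ : 0 < J)
    {ι : Type*} [Fintype ι] [DecidableEq ι]
    (Reg : Finset ι) (hReg : Reg.Nonempty)
    {Saux : Type*} [MeasurableSpace Saux] (μaux : Measure Saux) [IsProbabilityMeasure μaux]
    (μJ : Measure (Fin J)) [IsProbabilityMeasure μJ]
    (hμJ : ∀ j, μJ {j} = (J : ENNReal)⁻¹)
    -- the objective
    (fsample : ι → Fin J → EuclideanSpace ℝ (Fin p) → ℝ)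
    (floc : ι → EuclideanSpace ℝ (Fin p) → ℝ)
    (hfloc : ∀ ω, floc ω = fun x => (J : ℝ)⁻¹ * ∑ j, fsample ω j x)
    (f : EuclideanSpace ℝ (Fin p) → ℝ)
    (hf : f = fun x => (Reg.card : ℝ)⁻¹ * ∑ ω ∈ Reg, floc ω x)
    (hdiff : ∀ ω j, Differentiable ℝ (fsample ω j))
    -- Assumption 1
    (μ L : ℝ) (hμ : 0 < μ) (hL : 0 < L)
    (hsc : ∀ x y : EuclideanSpace ℝ (Fin p),
      f x ≥ f y + ⟪gradient f y, x - y⟫ + μ / 2 * ‖x - y‖ ^ 2)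
    (hlip : ∀ x y : EuclideanSpace ℝ (Fin p),
      ‖gradient f x - gradient f y‖ ≤ L * ‖x - y‖)
    (xstar : EuclideanSpace ℝ (Fin p)) (hmin : ∀ y, f xstar ≤ f y)
    -- current state, update direction and step size
    (x : EuclideanSpace ℝ (Fin p))
    (φ : ι → Fin J → EuclideanSpace ℝ (Fin p))
    (γ : ℝ) (hγ : 0 < γ)
    (z : (ι → Fin J) × Saux → EuclideanSpace ℝ (Fin p))
    (hz_meas : Measurable z)
    (hz2 : MemLp z 2 ((Measure.pi fun _ : ι => μJ).prod μaux))
    (xnext : (ι → Fin J) × Saux → EuclideanSpace ℝ (Fin p))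
    (hxnext : ∀ a, xnext a = x - γ • z a)
    -- S and its next value
    (S : ℝ)
    (hS : S = (Reg.card : ℝ)⁻¹ * ∑ ω ∈ Reg, (J : ℝ)⁻¹ * ∑ j, ‖x - φ ω j‖ ^ 2)
    (Snext : (ι → Fin J) × Saux → ℝ)
    (hSnext : ∀ a, Snext a = (Reg.card : ℝ)⁻¹ * ∑ ω ∈ Reg, (J : ℝ)⁻¹ *
        ∑ j, ‖xnext a - (if j = a.1 ω then x else φ ω j)‖ ^ 2) :
    ∫ a, Snext a ∂((Measure.pi fun _ : ι => μJ).prod μaux)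
      ≤ 4 * J * ∫ a, ‖xnext a - x + γ • gradient f x‖ ^ 2
            ∂((Measure.pi fun _ : ι => μJ).prod μaux)
        + 4 * J * γ ^ 2 * L ^ 2 * ‖x - xstar‖ ^ 2
        + (1 - 1 / (J : ℝ) ^ 2) * S :=
  saga_stored_points_recursion_general Reg hReg μaux μJ hμJ f L hlip xstar hmin x φ γ z hz2 xnext
    hxnext S hS Snext hSnext
end
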